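/- arXiv:2306.17433 — 3 statements merged into one kernel-verified Lean document; each statement's English description precedes it below -/
import Mathlib

section
/- Work in the upper half-plane model of H² with the geodesic γ parametrized by γ(t) = ( x₀ − y₀(cos t + cos ψ₀)/sin ψ₀ , −y₀ sin t / sin ψ₀ ) for t ∈ (0,π), where sin ψ₀ < 0, y₀ > 0. Suppose γ crosses the y-axis at parameter t*. Then the hyperbolic angle δ between γ'(t*) and the vertical field y∂_y at the crossing point satisfies cos δ = x₀·sin ψ₀ / y₀ − cos ψ₀. -/
open Real

/-!
The geodesic is a Euclidean half-circle traversed at constant Euclidean speed `y₀ / |sin ψ₀|`,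
with vertical velocity `-y₀ cos t / sin ψ₀`. Since `sin ψ₀ < 0`, the normalised vertical component
of `γ'(t)` is just `cos t`, and the crossing condition `x(t*) = 0` solves for `cos t*`.
-/

lemma deriv_const_sub_mul_cos_add_div (a b c s t : ℝ) :
    deriv (fun u => a - b * (cos u + c) / s) t = b * sin t / s := by
  have h := ((((hasDerivAt_cos t).add_const c).const_mul b).div_const s).const_sub a
  rw [h.deriv]
  ring

lemma deriv_neg_mul_sin_div (b s t : ℝ) :
    deriv (fun u => -b * sin u / s) t = -b * cos t / s :=
  (((hasDerivAt_sin t).const_mul (-b)).div_const s).deriv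

lemma sqrt_sq_mul_sin_div_add_sq_mul_cos_div (b s t : ℝ) :
    √((b * sin t / s) ^ 2 + (-b * cos t / s) ^ 2) = |b / s| := by
  rw [← sqrt_sq_eq_abs]
  congr 1
  linear_combination (b / s) ^ 2 * sin_sq_add_cos_sq t

lemma neg_mul_cos_div_div_abs_div {b s : ℝ} (hb : 0 < b) (hs : s < 0) (t : ℝ) :
    -b * cos t / s / |b / s| = cos t := by
  have hbs : b / s < 0 := div_neg_of_pos_of_neg hb hs
  rw [abs_of_neg hbs]
  field_simp [hs.ne]

theorem stmt_6_general (ψ₀ x₀ y₀ : ℝ) (hs : Real.sin ψ₀ < 0)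
    (hy₀ : 0 < y₀) (t : ℝ)
    (hcross : x₀ - y₀ * (Real.cos t + Real.cos ψ₀) / Real.sin ψ₀ = 0) :
    (deriv (fun u => -y₀ * Real.sin u / Real.sin ψ₀) t) /
      Real.sqrt ((deriv (fun u => x₀ - y₀ * (Real.cos u + Real.cos ψ₀) / Real.sin ψ₀) t) ^ 2 +
        (deriv (fun u => -y₀ * Real.sin u / Real.sin ψ₀) t) ^ 2) =
    x₀ * Real.sin ψ₀ / y₀ - Real.cos ψ₀ := by
  rw [deriv_neg_mul_sin_div, deriv_const_sub_mul_cos_add_div,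
    sqrt_sq_mul_sin_div_add_sq_mul_cos_div, neg_mul_cos_div_div_abs_div hy₀ hs]
  have hs0 := hs.ne
  field_simp at hcross ⊢
  linarith

/-- At the parameter `t*` where the geodesic
`γ(t) = (x₀ − y₀(cos t + cos ψ₀)/sin ψ₀, −y₀ sin t/sin ψ₀)` crosses the `y`-axis, the
cosine of the angle `δ` between `γ'(t*)` and the vertical field `y∂_y` equals
`x₀ sin ψ₀/y₀ − cos ψ₀` (the angle being computed with the conformal hyperbolic metric,
hence by the Euclidean formula). -/
theorem stmt_6 (ψ₀ x₀ y₀ : ℝ) (hψ : ψ₀ ∈ Set.Ioo π (2 * π)) (hs : Real.sin ψ₀ < 0)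
    (hy₀ : 0 < y₀) (t : ℝ) (ht : t ∈ Set.Ioo (0 : ℝ) π)
    (hcross : x₀ - y₀ * (Real.cos t + Real.cos ψ₀) / Real.sin ψ₀ = 0) :
    (deriv (fun u => -y₀ * Real.sin u / Real.sin ψ₀) t) /
      Real.sqrt ((deriv (fun u => x₀ - y₀ * (Real.cos u + Real.cos ψ₀) / Real.sin ψ₀) t) ^ 2 +
        (deriv (fun u => -y₀ * Real.sin u / Real.sin ψ₀) t) ^ 2) =
    x₀ * Real.sin ψ₀ / y₀ - Real.cos ψ₀ :=
  stmt_6_general ψ₀ x₀ y₀ hs hy₀ t hcross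
end

section
/- In the upper half-plane model of H², let v : [0, b] → H² be a unit-speed C² curve with v(0) = (0,1), initial tangent v'(0) = −E₁ (where E₁ = y∂ₓ), and suppose its geodesic curvature k_g (with respect to the normal Jv') satisfies k_g(s) < 2H ≤ 1 for all s and the total turning ∫₀ᵇ θ'(s) ds over any subinterval is at most φ < π/2 where k_g = 2H − θ' with θ' > 0. If v(s₀) lies on the y-axis for some s₀ ∈ (0,b] with x(s) < 0 on (0,s₀), and the curve meets the y-axis at v(s₀) making unoriented angle α with it, then the Gauss–Bonnet formula applied to the region U enclosed by v([0,s₀]) and the segment of the y-axis between (0,1) and v(s₀) gives −area(U) = π/2 + α − ∫₀^{s₀} θ'(s) ds + 2H s₀, and consequently π/2 + α − φ + 2Hs₀ < 0, which is impossible; hence the first coordinate x(s) of v(s) is strictly negative for all s ∈ (0, b]. -/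
/-!
Write the unit tangent of `v` (for the metric `|dv| / y`) as `(cos ψ, sin ψ)`: then `x' = y cos ψ`,
`y' = y sin ψ`, `ψ(0) = π`, and the geodesic curvature `k = 2H - θ' < 1` equals `ψ' + cos ψ`.
Since `k < 1`, `ψ` never reaches `2π`; since `ψ' ≥ -θ'` while `cos ψ ≤ 0` and the total turning is
`< π / 2`, `ψ` never drops to `π / 2`.

The horocycle tangent to `v` at `v(s)` on its left touches the real axis at
`c = x - y sin ψ / (1 - cos ψ)`, and `c' = y (k - 1) / (1 - cos ψ) ≤ 0`, so `c ≤ c(0) = 0`. Hence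
`sin ψ ≥ 0` wherever `x = 0`, which with `π / 2 < ψ < 2π` gives `x' = y cos ψ < 0` there: the curve,
which starts on the `y`-axis moving left, can never come back to it.
-/

open Real Set Filter Topology

theorem ContinuousOn.exists_Icc_mapsTo_of_descent {f : ℝ → ℝ} {a b c d : ℝ}
    (hf : ContinuousOn f (Icc a b)) (hab : a ≤ b) (hdc : d ≤ c) (ha : c ≤ f a)
    (hb : f b ≤ d) :
    ∃ t₁ t₀, a ≤ t₁ ∧ t₁ ≤ t₀ ∧ t₀ ≤ b ∧ f t₁ = c ∧ f t₀ = d ∧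
      MapsTo f (Icc t₁ t₀) (Icc d c) := by
  -- `t₀` is the first time `f` reaches `d`, and `t₁` the last time before `t₀` that `f` is at `c`
  set S := {s ∈ Icc a b | f s ≤ d}
  have hS : sInf S ∈ S := (hf.preimage_isClosed_of_isClosed isClosed_Icc isClosed_Iic).csInf_mem
    ⟨b, ⟨hab, le_rfl⟩, hb⟩ ⟨a, fun s hs => hs.1.1⟩
  set t₀ := sInf S
  have hSmin : ∀ s ∈ S, t₀ ≤ s := fun s hs => csInf_le ⟨a, fun s hs => hs.1.1⟩ hs
  have ht₀ : f t₀ = d := by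
    obtain ⟨s, hs, hfs⟩ := intermediate_value_Icc' hS.1.1 (hf.mono (Icc_subset_Icc_right hS.1.2))
      ⟨hS.2, hdc.trans ha⟩
    have := hSmin s ⟨⟨hs.1, hs.2.trans hS.1.2⟩, hfs.le⟩
    rwa [le_antisymm hs.2 this] at hfs
  set T := {s ∈ Icc a t₀ | c ≤ f s}
  have hT : sSup T ∈ T :=
    ((hf.mono (Icc_subset_Icc_right hS.1.2)).preimage_isClosed_of_isClosed isClosed_Icc
      isClosed_Ici).csSup_mem ⟨a, ⟨le_rfl, hS.1.1⟩, ha⟩ ⟨t₀, fun s hs => hs.1.2⟩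
  set t₁ := sSup T
  have hTmax : ∀ s ∈ T, s ≤ t₁ := fun s hs => le_csSup ⟨t₀, fun s hs => hs.1.2⟩ hs
  have ht₁ : f t₁ = c := by
    obtain ⟨s, hs, hfs⟩ := intermediate_value_Icc' hT.1.2
      (hf.mono (Icc_subset_Icc hT.1.1 hS.1.2)) ⟨ht₀ ▸ hdc, hT.2⟩
    have := hTmax s ⟨⟨hT.1.1.trans hs.1, hs.2⟩, hfs.ge⟩
    rwa [le_antisymm this hs.1] at hfs
  refine ⟨t₁, t₀, hT.1.1, hT.1.2, hS.1.2, ht₁, ht₀, fun s hs => ⟨?_, ?_⟩⟩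
  · by_contra! h
    have := hSmin s ⟨⟨hT.1.1.trans hs.1, hs.2.trans hS.1.2⟩, h.le⟩
    rw [le_antisymm hs.2 this, ht₀] at h
    exact h.false
  · by_contra! h
    have := hTmax s ⟨⟨hT.1.1.trans hs.1, hs.2⟩, h.le⟩
    rw [le_antisymm this hs.1, ht₁] at h
    exact h.false

theorem exists_hasDerivAt_eq_of_continuousOn_Icc {g : ℝ → ℝ} {a b : ℝ} (hab : a ≤ b)
    (hg : ContinuousOn g (Icc a b)) (c : ℝ) :
    ∃ ψ : ℝ → ℝ, ψ a = c ∧ ∀ s ∈ Icc a b, HasDerivAt ψ (g s) s := by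
  set G := IccExtend hab ((Icc a b).domRestrict g)
  have hG : Continuous G := hg.domRestrict.comp continuous_projIcc
  refine ⟨fun s => c + ∫ t in a..s, G t, by simp, fun s hs => ?_⟩
  have := ((hG.integral_hasStrictDerivAt a s).hasDerivAt).const_add c
  rwa [show G s = g s from IccExtend_of_mem hab _ hs] at this

theorem neg_of_hasDerivAt_neg_of_eq_zero {f f' : ℝ → ℝ} {a b : ℝ}
    (hf : ∀ x ∈ Icc a b, HasDerivAt f (f' x) x) (ha : f a ≤ 0)
    (hf' : ∀ x ∈ Icc a b, f x = 0 → f' x < 0) : ∀ x ∈ Ioc a b, f x < 0 := by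
  have hle : ∀ x ∈ Icc a b, f x ≤ 0 :=
    image_le_of_deriv_right_lt_deriv_boundary' (B := fun _ => 0) (B' := fun _ => 0)
      (fun x hx => (hf x hx).continuousAt.continuousWithinAt)
      (fun x hx => (hf x (Ico_subset_Icc_self hx)).hasDerivWithinAt) ha continuousOn_const
      (fun x _ => hasDerivWithinAt_const _ _ _) (fun x hx => hf' x (Ico_subset_Icc_self hx))
  intro x hx
  refine (hle x (Ioc_subset_Icc_self hx)).lt_of_ne fun hx0 => ?_
  have hx' := hf' x (Ioc_subset_Icc_self hx) hx0
  -- `f` has a maximum at `x` on `[a, x]`, so its left difference quotients at `x` are `≥ 0`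
  have hslope : Tendsto (slope f x) (𝓝[<] x) (𝓝 (f' x)) :=
    (hasDerivAt_iff_tendsto_slope.1 (hf x (Ioc_subset_Icc_self hx))).mono_left
      (nhdsWithin_mono _ fun t ht => ne_of_lt ht)
  obtain ⟨t, hneg, ht⟩ := ((hslope.eventually_lt_const hx').and
    (Ioo_mem_nhdsLT hx.1)).exists
  rw [slope_def_field, hx0, sub_zero, div_neg_iff] at hneg
  have := hle t ⟨ht.1.le, ht.2.le.trans hx.2⟩
  rcases hneg with h | h <;> linarith [ht.2, h.1, h.2]

theorem HasDerivAt.eq_zero_of_eqOn_Icc {f : ℝ → ℝ} {f' a b c s : ℝ} (hab : a < b)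
    (hf : HasDerivAt f f' s) (hc : EqOn f (fun _ => c) (Icc a b)) (hs : s ∈ Icc a b) :
    f' = 0 :=
  (uniqueDiffOn_Icc hab s hs).eq_deriv _ hf.hasDerivWithinAt
    ((hasDerivWithinAt_const s _ c).congr hc (hc hs))

theorem eq_cos_sin_of_hasDerivAt {p q p' q' ψ : ℝ → ℝ} {a b : ℝ} (hab : a < b)
    (hp : ∀ s ∈ Icc a b, HasDerivAt p (p' s) s) (hq : ∀ s ∈ Icc a b, HasDerivAt q (q' s) s)
    (hψ : ∀ s ∈ Icc a b, HasDerivAt ψ (p s * q' s - q s * p' s) s)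
    (hunit : ∀ s ∈ Icc a b, p s ^ 2 + q s ^ 2 = 1) (hpa : p a = cos (ψ a))
    (hqa : q a = sin (ψ a)) :
    ∀ s ∈ Icc a b, p s = cos (ψ s) ∧ q s = sin (ψ s) := by
  have horth : ∀ s ∈ Icc a b, p s * p' s + q s * q' s = 0 := fun s hs => by
    have := (((hp s hs).mul (hp s hs)).add ((hq s hs).mul (hq s hs))).eq_zero_of_eqOn_Icc hab
      (c := 1) (fun u hu => by simp only [← sq]; exact hunit u hu) hs
    linear_combination this / 2
  set r := fun s => p s * cos (ψ s) + q s * sin (ψ s)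
  have hr : ∀ s ∈ Icc a b, HasDerivAt r 0 s := fun s hs => by
    have : HasDerivAt r _ s := ((hp s hs).mul ((hasDerivAt_cos _).comp s (hψ s hs))).add
      ((hq s hs).mul ((hasDerivAt_sin _).comp s (hψ s hs)))
    refine this.congr_deriv ?_
    rw [Function.comp_apply]
    -- `r' = (p p' + q q') r + (p' cos ψ + q' sin ψ) (1 - p ^ 2 - q ^ 2)`
    linear_combination (p s * cos (ψ s) + q s * sin (ψ s)) * horth s hs
      - (cos (ψ s) * p' s + sin (ψ s) * q' s) * hunit s hs
  have hr1 : ∀ s ∈ Icc a b, r s = 1 := fun s hs => by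
    rw [constant_of_has_deriv_right_zero (fun x hx => (hr x hx).continuousAt.continuousWithinAt)
      (fun x hx => (hr x (Ico_subset_Icc_self hx)).hasDerivWithinAt) s hs]
    simp only [r, ← hpa, ← hqa]
    linear_combination hunit a (left_mem_Icc.2 hab.le)
  intro s hs
  have h := hr1 s hs
  have hsq : (p s - cos (ψ s)) ^ 2 + (q s - sin (ψ s)) ^ 2 = 0 := by
    linear_combination hunit s hs + sin_sq_add_cos_sq (ψ s) - 2 * h
  constructor <;> nlinarith [sq_nonneg (p s - cos (ψ s)), sq_nonneg (q s - sin (ψ s))]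

theorem sub_eq_cross_of_curvature_eq {Y x' y' x'' y'' k : ℝ} (hY : 0 < Y)
    (hunit : √(x' ^ 2 + y' ^ 2) = Y)
    (hkg : Y * (x' * y'' - y' * x'') / √(x' ^ 2 + y' ^ 2) ^ 3 + x' / √(x' ^ 2 + y' ^ 2) = k) :
    x' / Y * ((y'' * Y - y' * y') / Y ^ 2) - y' / Y * ((x'' * Y - x' * y') / Y ^ 2) =
      k - x' / Y := by
  rw [hunit] at hkg
  field_simp at hkg ⊢
  linear_combination Y * hkg

theorem exists_tangent_angle {Y x' y' x'' y'' k : ℝ → ℝ} {a b ψ₀ : ℝ} (hab : a < b)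
    (hY : ∀ s ∈ Icc a b, HasDerivAt Y (y' s) s)
    (hx'' : ∀ s ∈ Icc a b, HasDerivAt x' (x'' s) s)
    (hy'' : ∀ s ∈ Icc a b, HasDerivAt y' (y'' s) s)
    (hYpos : ∀ s ∈ Icc a b, 0 < Y s)
    (hunit : ∀ s ∈ Icc a b, √(x' s ^ 2 + y' s ^ 2) = Y s)
    (hk : ContinuousOn k (Icc a b))
    (hkg : ∀ s ∈ Icc a b, Y s * (x' s * y'' s - y' s * x'' s) / √(x' s ^ 2 + y' s ^ 2) ^ 3 +
      x' s / √(x' s ^ 2 + y' s ^ 2) = k s)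
    (hx'a : x' a = Y a * cos ψ₀) (hy'a : y' a = Y a * sin ψ₀) :
    ∃ ψ : ℝ → ℝ, ψ a = ψ₀ ∧ ∀ s ∈ Icc a b,
      x' s = Y s * cos (ψ s) ∧ y' s = Y s * sin (ψ s) ∧ HasDerivAt ψ (k s - cos (ψ s)) s := by
  have hYne : ∀ s ∈ Icc a b, Y s ≠ 0 := fun s hs => (hYpos s hs).ne'
  set p := fun s => x' s / Y s
  set q := fun s => y' s / Y s
  have hp : ∀ s ∈ Icc a b, HasDerivAt p ((x'' s * Y s - x' s * y' s) / Y s ^ 2) s :=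
    fun s hs => (hx'' s hs).div (hY s hs) (hYne s hs)
  have hq : ∀ s ∈ Icc a b, HasDerivAt q ((y'' s * Y s - y' s * y' s) / Y s ^ 2) s :=
    fun s hs => (hy'' s hs).div (hY s hs) (hYne s hs)
  have hpq : ∀ s ∈ Icc a b, p s ^ 2 + q s ^ 2 = 1 := fun s hs => by
    have h := hunit s hs
    rw [sqrt_eq_iff_eq_sq (by positivity) (hYpos s hs).le] at h
    simp only [p, q]
    field_simp [hYne s hs]
    linear_combination h
  have hg : ContinuousOn (fun s => k s - p s) (Icc a b) :=
    hk.sub (ContinuousOn.div (fun s hs => (hx'' s hs).continuousAt.continuousWithinAt)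
      (fun s hs => (hY s hs).continuousAt.continuousWithinAt) hYne)
  obtain ⟨ψ, hψa, hψ⟩ := exists_hasDerivAt_eq_of_continuousOn_Icc hab.le hg ψ₀
  have hψ' : ∀ s ∈ Icc a b, HasDerivAt ψ (p s * ((y'' s * Y s - y' s * y' s) / Y s ^ 2)
      - q s * ((x'' s * Y s - x' s * y' s) / Y s ^ 2)) s := fun s hs =>
    (hψ s hs).congr_deriv (sub_eq_cross_of_curvature_eq (hYpos s hs) (hunit s hs) (hkg s hs)).symm
  have hcs := eq_cos_sin_of_hasDerivAt hab hp hq hψ' hpq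
    (by simp [p, hψa, hx'a, hYne a (left_mem_Icc.2 hab.le)])
    (by simp [q, hψa, hy'a, hYne a (left_mem_Icc.2 hab.le)])
  refine ⟨ψ, hψa, fun s hs => ⟨?_, ?_, ?_⟩⟩
  · rw [← (hcs s hs).1, mul_div_cancel₀ _ (hYne s hs)]
  · rw [← (hcs s hs).2, mul_div_cancel₀ _ (hYne s hs)]
  · rw [← (hcs s hs).1]; exact hψ s hs

theorem lt_two_pi_of_hasDerivAt_sub_cos {ψ k : ℝ → ℝ} {a b : ℝ}
    (hψ : ∀ s ∈ Icc a b, HasDerivAt ψ (k s - cos (ψ s)) s) (hk : ∀ s ∈ Icc a b, k s < 1)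
    (ha : ψ a < 2 * π) : ∀ s ∈ Icc a b, ψ s < 2 * π := by
  -- barrier `2π - ε e^{a - s}`, which works since `1 - cos q ≤ q` for `0 ≤ q ≤ 1`
  set ε := min 1 (2 * π - ψ a)
  have hε : 0 < ε := lt_min one_pos (by linarith)
  have hB : ∀ s, HasDerivAt (fun s => 2 * π - ε * exp (a - s)) (ε * exp (a - s)) s :=
    fun s => (((hasDerivAt_id s).const_sub a).exp.const_mul ε).const_sub (2 * π)
      |>.congr_deriv (by simp)
  have hle := image_le_of_deriv_right_lt_deriv_boundary'
    (fun s hs => (hψ s hs).continuousAt.continuousWithinAt)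
    (fun s hs => (hψ s (Ico_subset_Icc_self hs)).hasDerivWithinAt)
    (show ψ a ≤ 2 * π - ε * exp (a - a) by
      rw [sub_self, exp_zero, mul_one]; linarith [min_le_right 1 (2 * π - ψ a)])
    (fun s _ => (hB s).continuousAt.continuousWithinAt) (fun s _ => (hB s).hasDerivWithinAt)
    (fun s hs hψs => by
      have hq : ε * exp (a - s) ≤ 1 :=
        mul_le_one₀ (min_le_left _ _) (exp_pos _).le (exp_le_one_iff.2 (by linarith [hs.1]))
      have hcos := one_sub_sq_div_two_le_cos (x := ε * exp (a - s))
      rw [hψs, cos_two_pi_sub]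
      nlinarith [hk s (Ico_subset_Icc_self hs), mul_pos hε (exp_pos (a - s))])
  exact fun s hs => (hle hs).trans_lt (by simpa using mul_pos hε (exp_pos (a - s)))

theorem pi_div_two_lt_of_hasDerivAt_sub_cos {ψ k θ : ℝ → ℝ} {a b φ : ℝ}
    (hψ : ∀ s ∈ Icc a b, HasDerivAt ψ (k s - cos (ψ s)) s) (hk : ContinuousOn k (Icc a b))
    (hθ : ContinuousOn θ (Icc a b)) (hkθ : ∀ s ∈ Icc a b, -θ s ≤ k s)
    (hturn : ∀ s₁ s₂, a ≤ s₁ → s₁ ≤ s₂ → s₂ ≤ b → ∫ s in s₁..s₂, θ s ≤ φ)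
    (hφ : φ < π / 2) (ha : π ≤ ψ a) : ∀ s ∈ Icc a b, π / 2 < ψ s := by
  intro t ht
  by_contra! hψt
  have hψc : ContinuousOn ψ (Icc a b) := fun s hs => (hψ s hs).continuousAt.continuousWithinAt
  obtain ⟨t₁, t₀, hat₁, ht₁₀, ht₀, hψt₁, hψt₀, hmaps⟩ :=
    (hψc.mono (Icc_subset_Icc_right ht.2)).exists_Icc_mapsTo_of_descent ht.1
      (by linarith [pi_pos]) ha hψt
  -- while `ψ` descends from `π` to `π / 2`, `cos ψ ≤ 0`, so `ψ' ≥ k ≥ -θ`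
  have hsub : uIcc t₁ t₀ ⊆ Icc a b := by
    rw [uIcc_of_le ht₁₀]; exact Icc_subset_Icc hat₁ (ht₀.trans ht.2)
  have hψ' : ContinuousOn (fun s => k s - cos (ψ s)) (uIcc t₁ t₀) :=
    (hk.sub (continuous_cos.comp_continuousOn hψc)).mono hsub
  have hftc : ∫ s in t₁..t₀, (k s - cos (ψ s)) = ψ t₀ - ψ t₁ :=
    intervalIntegral.integral_eq_sub_of_hasDerivAt (fun s hs => hψ s (hsub hs))
      hψ'.intervalIntegrable
  have hmono : ∫ s in t₁..t₀, -θ s ≤ ∫ s in t₁..t₀, (k s - cos (ψ s)) :=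
    intervalIntegral.integral_mono_on ht₁₀ ((hθ.mono hsub).neg.intervalIntegrable)
      hψ'.intervalIntegrable fun s hs => by
        have hcos := cos_nonpos_of_pi_div_two_le_of_le (hmaps hs).1
          (by linarith [(hmaps hs).2, pi_pos])
        linarith [hkθ s (hsub (uIcc_of_le ht₁₀ ▸ hs))]
  rw [intervalIntegral.integral_neg, hftc, hψt₁, hψt₀] at hmono
  linarith [hturn t₁ t₀ hat₁ ht₁₀ (ht₀.trans ht.2)]

/-- The horocycle through `(X, Y)` tangent to the direction of angle `ψ` and curving to its left is
the Euclidean circle of radius `Y / (1 - cos ψ)` touching the real axis at `horocycleFoot X Y ψ`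
(junk value `X` when `cos ψ = 1`). -/
noncomputable def horocycleFoot (X Y ψ : ℝ) : ℝ := X - Y * sin ψ / (1 - cos ψ)

theorem hasDerivAt_horocycleFoot {X Y ψ : ℝ → ℝ} {k s : ℝ}
    (hX : HasDerivAt X (Y s * cos (ψ s)) s) (hY : HasDerivAt Y (Y s * sin (ψ s)) s)
    (hψ : HasDerivAt ψ (k - cos (ψ s)) s) (hψs : cos (ψ s) ≠ 1) :
    HasDerivAt (fun s => horocycleFoot (X s) (Y s) (ψ s)) (Y s * (k - 1) / (1 - cos (ψ s))) s := by
  have hne : 1 - cos (ψ s) ≠ 0 := sub_ne_zero.2 (Ne.symm hψs)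
  refine (hX.sub ((hY.mul ((hasDerivAt_sin _).comp s hψ)).div
    (((hasDerivAt_cos _).comp s hψ).const_sub 1) hne)).congr_deriv ?_
  simp only [Pi.mul_apply, Function.comp_apply]
  field_simp
  linear_combination Y s * (k - 1) * sin_sq_add_cos_sq (ψ s)

theorem cos_neg_of_sin_nonneg {x : ℝ} (h₁ : π / 2 < x) (h₂ : x < 2 * π) (hsin : 0 ≤ sin x) :
    cos x < 0 := by
  have hx : x ≤ π := by
    by_contra! h
    have := sin_neg_of_neg_of_neg_pi_lt (x := x - 2 * π) (by linarith) (by linarith)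
    rw [sin_sub_two_pi] at this
    linarith
  exact cos_neg_of_pi_div_two_lt_of_lt h₁ (by linarith [pi_pos])

theorem one_sub_cos_pos {x : ℝ} (h₁ : 0 < x) (h₂ : x < 2 * π) : 0 < 1 - cos x :=
  sub_pos.2 <| (cos_le_one x).lt_of_ne fun h =>
    h₁.ne' ((cos_eq_one_iff_of_lt_of_lt (by linarith [pi_pos]) h₂).1 h)

theorem antitoneOn_horocycleFoot {X Y ψ k : ℝ → ℝ} {a b : ℝ}
    (hX : ∀ s ∈ Icc a b, HasDerivAt X (Y s * cos (ψ s)) s)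
    (hY : ∀ s ∈ Icc a b, HasDerivAt Y (Y s * sin (ψ s)) s)
    (hψ : ∀ s ∈ Icc a b, HasDerivAt ψ (k s - cos (ψ s)) s)
    (hYpos : ∀ s ∈ Icc a b, 0 < Y s) (hk : ∀ s ∈ Icc a b, k s < 1)
    (hψ₁ : ∀ s ∈ Icc a b, 0 < ψ s) (hψ₂ : ∀ s ∈ Icc a b, ψ s < 2 * π) :
    AntitoneOn (fun s => horocycleFoot (X s) (Y s) (ψ s)) (Icc a b) := by
  have hpos : ∀ s ∈ Icc a b, 0 < 1 - cos (ψ s) := fun s hs => one_sub_cos_pos (hψ₁ s hs) (hψ₂ s hs)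
  have hfoot : ∀ s ∈ Icc a b, HasDerivAt (fun s => horocycleFoot (X s) (Y s) (ψ s))
      (Y s * (k s - 1) / (1 - cos (ψ s))) s := fun s hs =>
    hasDerivAt_horocycleFoot (hX s hs) (hY s hs) (hψ s hs) (by linarith [hpos s hs])
  refine antitoneOn_of_deriv_nonpos (convex_Icc a b)
    (fun s hs => (hfoot s hs).continuousAt.continuousWithinAt)
    (fun s hs => (hfoot s (interior_subset hs)).differentiableAt.differentiableWithinAt)
    fun s hs => ?_
  replace hs := interior_subset hs
  rw [(hfoot s hs).deriv]
  exact div_nonpos_of_nonpos_of_nonneg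
    (mul_nonpos_of_nonneg_of_nonpos (hYpos s hs).le (by linarith [hk s hs])) (hpos s hs).le

theorem fst_neg_of_curvature_lt_one {X Y ψ k : ℝ → ℝ} {a b : ℝ}
    (hX : ∀ s ∈ Icc a b, HasDerivAt X (Y s * cos (ψ s)) s)
    (hY : ∀ s ∈ Icc a b, HasDerivAt Y (Y s * sin (ψ s)) s)
    (hψ : ∀ s ∈ Icc a b, HasDerivAt ψ (k s - cos (ψ s)) s)
    (hYpos : ∀ s ∈ Icc a b, 0 < Y s) (hk : ∀ s ∈ Icc a b, k s < 1)
    (hψ₁ : ∀ s ∈ Icc a b, π / 2 < ψ s) (hψ₂ : ∀ s ∈ Icc a b, ψ s < 2 * π)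
    (hXa : X a = 0) (hψa : ψ a = π) : ∀ s ∈ Ioc a b, X s < 0 := by
  have hfoot : ∀ s ∈ Icc a b, horocycleFoot (X s) (Y s) (ψ s) ≤ 0 := fun s hs => by
    have := antitoneOn_horocycleFoot hX hY hψ hYpos hk (fun s hs => by linarith [hψ₁ s hs, pi_pos])
      hψ₂ (left_mem_Icc.2 (hs.1.trans hs.2)) hs hs.1
    simpa [horocycleFoot, hXa, hψa] using this
  -- where `X = 0` the horocycle foot `≤ 0` forces `sin ψ ≥ 0`, so the curve moves to the left
  refine neg_of_hasDerivAt_neg_of_eq_zero hX hXa.le fun s hs hXs => ?_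
  have hpos := one_sub_cos_pos (by linarith [hψ₁ s hs, pi_pos]) (hψ₂ s hs)
  have hsin : 0 ≤ sin (ψ s) := by
    have := hfoot s hs
    rw [horocycleFoot, hXs, zero_sub, neg_nonpos, div_nonneg_iff] at this
    rcases this with ⟨h, -⟩ | ⟨-, h⟩
    · exact nonneg_of_mul_nonneg_right h (hYpos s hs)
    · linarith
  exact mul_neg_of_pos_of_neg (hYpos s hs) (cos_neg_of_sin_nonneg (hψ₁ s hs) (hψ₂ s hs) hsin)

/-- Item (1) of the second-period lemma: let `v` be a unit-speed (for the hyperbolic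
metric of the upper half-plane) `C²` curve with `v(0) = (0,1)` and initial tangent
`−E₁ = (−1,0)`, whose geodesic curvature (computed by the conformal formula
`k_g = y·κ_e + x'/‖v'‖`) equals `2H − θ'` with `θ' > 0`, the total turning over any
subinterval of `[0,b]` being at most `φ < π/2`, and `2H ≤ 1`, `H > 0`. Then the first
coordinate of `v(s)` is strictly negative for all `s ∈ (0, b]` (otherwise Gauss–Bonnet
applied to the region enclosed by `v` and the `y`-axis gives
`−area(U) = π/2 + α − ∫θ' + 2Hs₀ > 0`, a contradiction). -/
theorem stmt_12 (b φ H : ℝ) (hb : 0 < b) (hφ : φ < π / 2) (hH₀ : 0 < H)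
    (hH₁ : 2 * H ≤ 1)
    (v : ℝ → ℝ × ℝ) (x' y' x'' y'' θ' : ℝ → ℝ)
    (hx' : ∀ s, HasDerivAt (fun u => (v u).1) (x' s) s)
    (hy' : ∀ s, HasDerivAt (fun u => (v u).2) (y' s) s)
    (hx'' : ∀ s, HasDerivAt x' (x'' s) s)
    (hy'' : ∀ s, HasDerivAt y' (y'' s) s)
    (hup : ∀ s ∈ Set.Icc 0 b, 0 < (v s).2)
    (hunit : ∀ s ∈ Set.Icc 0 b, Real.sqrt (x' s ^ 2 + y' s ^ 2) = (v s).2)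
    (hv0 : v 0 = (0, 1)) (hx'0 : x' 0 = -1) (hy'0 : y' 0 = 0)
    (hθ'pos : ∀ s ∈ Set.Icc 0 b, 0 < θ' s)
    (hθ'c : ContinuousOn θ' (Set.Icc 0 b))
    (hturn : ∀ s₁ s₂, 0 ≤ s₁ → s₁ ≤ s₂ → s₂ ≤ b → (∫ s in s₁..s₂, θ' s) ≤ φ)
    (hkg : ∀ s ∈ Set.Icc 0 b,
      (v s).2 * (x' s * y'' s - y' s * x'' s) / (Real.sqrt (x' s ^ 2 + y' s ^ 2)) ^ 3 +
        x' s / Real.sqrt (x' s ^ 2 + y' s ^ 2) = 2 * H - θ' s) :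
    ∀ s ∈ Set.Ioc 0 b, (v s).1 < 0 := by
  have hk : ContinuousOn (fun s => 2 * H - θ' s) (Icc 0 b) := continuousOn_const.sub hθ'c
  obtain ⟨ψ, hψ0, hψ⟩ := exists_tangent_angle (ψ₀ := π) hb (fun s _ => hy' s)
    (fun s _ => hx'' s) (fun s _ => hy'' s) hup hunit hk hkg (by simp [hv0, hx'0])
    (by simp [hv0, hy'0])
  have hψ' : ∀ s ∈ Icc 0 b, HasDerivAt ψ (2 * H - θ' s - cos (ψ s)) s :=
    fun s hs => (hψ s hs).2.2
  have hk1 : ∀ s ∈ Icc 0 b, 2 * H - θ' s < 1 := fun s hs => by linarith [hθ'pos s hs]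
  have hψ₂ := lt_two_pi_of_hasDerivAt_sub_cos hψ' hk1 (by linarith [hψ0, pi_pos])
  have hψ₁ := pi_div_two_lt_of_hasDerivAt_sub_cos hψ' hk hθ'c (fun s _ => by linarith) hturn hφ
    hψ0.ge
  exact fst_neg_of_curvature_lt_one (fun s hs => (hψ s hs).1 ▸ hx' s)
    (fun s hs => (hψ s hs).2.1 ▸ hy' s) hψ' hup hk1 hψ₁ hψ₂ (by simp [hv0]) hψ0
end

section
/- For 0 < φ < π/2, one has arcsinh(cot φ) < 2·arctanh(cos φ); that is, the embeddedness threshold a_emb(φ) is strictly smaller than the maximal length a_max(φ). -/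
open Real

/-- The inverse hyperbolic tangent, `arctanh x = (1/2)·log((1+x)/(1−x))`. -/
noncomputable def arctanh (x : ℝ) : ℝ := (1 / 2) * Real.log ((1 + x) / (1 - x))

/-- For `0 < φ < π/2` one has `arcsinh(cot φ) < 2·arctanh(cos φ)`: the embeddedness
threshold `a_emb(φ)` is strictly smaller than the maximal length `a_max(φ)`. -/
theorem stmt_15 (φ : ℝ) (hφ₀ : 0 < φ) (hφ₁ : φ < π / 2) :
    Real.arsinh (Real.cos φ / Real.sin φ) < 2 * arctanh (Real.cos φ) := by
  have hpi := Real.pi_pos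
  have hc : 0 < Real.cos φ := Real.cos_pos_of_mem_Ioo ⟨by linarith, hφ₁⟩
  have hs : 0 < Real.sin φ := Real.sin_pos_of_pos_of_lt_pi hφ₀ (by linarith)
  have hpy := Real.sin_sq_add_cos_sq φ
  set c := Real.cos φ with hcdef
  set s := Real.sin φ with hsdef
  have hc1 : c < 1 := by nlinarith
  have hsq : 1 + (c / s) ^ 2 = (1 / s) ^ 2 := by
    field_simp
    nlinarith
  have hL : Real.arsinh (c / s) = Real.log ((1 + c) / s) := by
    rw [Real.arsinh, hsq, Real.sqrt_sq (by positivity)]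
    ring_nf
  have hR : 2 * arctanh c = Real.log ((1 + c) / (1 - c)) := by
    unfold arctanh; ring
  rw [hL, hR]
  apply Real.log_lt_log (by positivity)
  have hlt : 1 - c < s := by nlinarith
  exact div_lt_div_of_pos_left (by linarith) (by linarith) hlt
end
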